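/- arXiv:1712.06763 — 2 statements merged into one kernel-verified Lean document; each statement's English description precedes it below -/
import Mathlib

section
/- Let d ≥ 2, 2 ≤ k < ℓ be integers and ε > 0 a real. Writing q₋ = q/(1+ε) for any integer q, the inequality ((k-1)/k₋)^d + 1/ℓ₋^d < ((ℓ-1)/ℓ₋)^d holds, i.e., the cost 1/ℓ₋^d / ((k-1)^d/k₋^d + 1/ℓ₋^d) that a cube of side (1+ε)/ℓ would pay by joining a full bin of (k-1)^d cubes of side (1+ε)/k exceeds the cost 1/ℓ₋^d / ((ℓ-1)^d/ℓ₋^d) it pays in a full bin of (ℓ-1)^d cubes of side (1+ε)/ℓ. -/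
/-! The factor `(1 + ε) ^ d` is common to all three terms, so the claim reduces to
`((k - 1) / k) ^ d + 1 / ℓ ^ d < ((ℓ - 1) / ℓ) ^ d`. For `d = 2` this is a polynomial inequality,
and it propagates to larger `d` because both `(k - 1) / k` and `1 / ℓ` are at most `(ℓ - 1) / ℓ`.
The cost comparison is the same inequality between the occupied volumes of the two bins. -/

theorem pow_add_pow_lt_pow_of_le {R : Type*} [Semiring R] [LinearOrder R]
    [IsStrictOrderedRing R] {x y z : R} {m n : ℕ} (hx : 0 ≤ x) (hy : 0 ≤ y) (hxz : x ≤ z)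
    (hyz : y ≤ z) (hmn : m ≤ n) (hm : x ^ m + y ^ m < z ^ m) : x ^ n + y ^ n < z ^ n := by
  induction n, hmn using Nat.le_induction with
  | base => exact hm
  | succ n _ ih =>
    have hz : 0 < z := by
      refine (hx.trans hxz).lt_of_ne ?_
      rintro rfl
      obtain rfl : x = 0 := le_antisymm hxz hx
      obtain rfl : y = 0 := le_antisymm hyz hy
      exact (le_add_of_nonneg_left (pow_nonneg le_rfl n)).not_gt ih
    calc x ^ (n + 1) + y ^ (n + 1) ≤ (x ^ n + y ^ n) * z := by
          rw [pow_succ, pow_succ, add_mul]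
          gcongr
      _ < z ^ n * z := mul_lt_mul_of_pos_right ih hz
      _ = z ^ (n + 1) := (pow_succ z n).symm

theorem sub_one_div_pow_add_inv_pow_lt {K L : ℝ} {d : ℕ} (hK : 1 < K) (hKL : K + 1 ≤ L)
    (hd : 2 ≤ d) : ((K - 1) / K) ^ d + 1 / L ^ d < ((L - 1) / L) ^ d := by
  have hK0 : 0 < K := by linarith
  have hL0 : 0 < L := by linarith
  rw [← one_div_pow]
  refine pow_add_pow_lt_pow_of_le (by positivity) (by positivity) ?_ ?_ hd ?_
  · rw [div_le_div_iff₀ hK0 hL0]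
    linarith
  · rw [div_le_div_iff_of_pos_right hL0]
    linarith
  · have hK1 : 0 < K - 1 := by linarith
    have hgap : 0 ≤ L - K - 1 := by linarith
    have hcross : 0 ≤ 2 * K * L - K - L := by nlinarith
    -- `K²(L-1)² - L²(K-1)² - K² = (L-K-1)(2KL-K-L) + K(L-K-1) + (K-1)(L-1) + (K-1)`
    have poly : (K - 1) ^ 2 * L ^ 2 + K ^ 2 < K ^ 2 * (L - 1) ^ 2 := by
      nlinarith [mul_nonneg hgap hcross, mul_nonneg hK0.le hgap,
        mul_pos hK1 (by linarith : 0 < L - 1)]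
    calc ((K - 1) / K) ^ 2 + (1 / L) ^ 2 = ((K - 1) ^ 2 * L ^ 2 + K ^ 2) / (K ^ 2 * L ^ 2) := by
          field_simp
      _ < K ^ 2 * (L - 1) ^ 2 / (K ^ 2 * L ^ 2) := by gcongr
      _ = ((L - 1) / L) ^ 2 := by field_simp

theorem sub_one_div_div_pow_add_inv_div_pow_lt {K L c : ℝ} {d : ℕ} (hK : 1 < K)
    (hKL : K + 1 ≤ L) (hc : 0 < c) (hd : 2 ≤ d) :
    ((K - 1) / (K / c)) ^ d + 1 / (L / c) ^ d < ((L - 1) / (L / c)) ^ d := by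
  have scale (a M : ℝ) : a / (M / c) = c * (a / M) := by
    rw [div_div_eq_mul_div, mul_comm, mul_div_assoc]
  rw [← one_div_pow, scale, scale, scale, mul_pow, mul_pow, mul_pow, ← mul_add, one_div_pow]
  exact mul_lt_mul_of_pos_left (sub_one_div_pow_add_inv_pow_lt hK hKL hd) (pow_pos hc d)

theorem stmt_4 (d k ℓ : ℕ) (ε : ℝ) (hd : 2 ≤ d) (hk : 2 ≤ k) (hkℓ : k < ℓ) (hε : 0 < ε) :
    ((((k : ℝ) - 1) / ((k : ℝ) / (1 + ε))) ^ d + 1 / ((ℓ : ℝ) / (1 + ε)) ^ d <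
      (((ℓ : ℝ) - 1) / ((ℓ : ℝ) / (1 + ε))) ^ d) ∧
    ((1 / ((ℓ : ℝ) / (1 + ε)) ^ d) / ((((ℓ : ℝ) - 1) ^ d) / ((ℓ : ℝ) / (1 + ε)) ^ d) <
      (1 / ((ℓ : ℝ) / (1 + ε)) ^ d) /
        ((((k : ℝ) - 1) ^ d) / ((k : ℝ) / (1 + ε)) ^ d + 1 / ((ℓ : ℝ) / (1 + ε)) ^ d)) := by
  have hK : (1 : ℝ) < k := by exact_mod_cast hk
  have hKL : (k : ℝ) + 1 ≤ ℓ := by exact_mod_cast hkℓ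
  have hℓ : (0 : ℝ) < ℓ := by linarith
  have hsum := sub_one_div_div_pow_add_inv_div_pow_lt hK hKL (by linarith : 0 < 1 + ε) hd
  refine ⟨hsum, div_lt_div_of_pos_left (by positivity) ?_ ?_⟩
  · have : (0 : ℝ) ≤ ((k : ℝ) - 1) ^ d := pow_nonneg (by linarith) d
    positivity
  · simpa only [div_pow] using hsum
end

section
/- Fix integers k ≥ 2 and S ≥ k and a real ε with 0 < ε ≤ S⁻². With x^(k)(j) = (j-1)(1+ε)/k for 1 ≤ j < k, x^(k)(k) = 1 - (1+ε)/k, and y^(k)(j) = x^(k)(j) + (1+ε)/k, the open intervals I^(k)(j) = (x^(k)(j), y^(k)(j)), for 1 ≤ j ≤ k, are pairwise disjoint except for the single pair I^(k)(k-1) and I^(k)(k). -/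
/-- Base point `x^(k)(j)` for `1 ≤ j ≤ k`. -/
noncomputable def xpt (ε : ℝ) (k j : ℕ) : ℝ :=
  if j < k then ((j : ℝ) - 1) * (1 + ε) / k else 1 - (1 + ε) / k

/-- Upper point `y^(k)(j) = x^(k)(j) + (1+ε)/k`. -/
noncomputable def ypt (ε : ℝ) (k j : ℕ) : ℝ := xpt ε k j + (1 + ε) / k

/-!
All intervals have length `h = (1 + ε)/k`. The first `k - 1` of them tile `[0, (k - 1) h]`
end to end, and the last one, `(1 - h, 1)`, starts before `(k - 1) h` because `k h = 1 + ε > 1`.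
It stays clear of the interval `k - 2`, which ends at `(k - 2) h`, as long as `(k - 1) h ≤ 1`,
i.e. `(k - 1) ε ≤ 1`, which follows from `ε ≤ S⁻²` and `k ≤ S`.
-/

section Intervals

variable {ε : ℝ} {k i j : ℕ}

lemma xpt_of_lt (hj : j < k) : xpt ε k j = ((j : ℝ) - 1) * (1 + ε) / k := if_pos hj

lemma ypt_of_lt (hj : j < k) : ypt ε k j = j * (1 + ε) / k := by
  rw [ypt, xpt_of_lt hj]; ring

lemma xpt_self : xpt ε k k = 1 - (1 + ε) / k := if_neg (lt_irrefl k)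

lemma ypt_self : ypt ε k k = 1 := by
  rw [ypt, xpt_self]; ring

lemma ypt_le_xpt (hε : 0 ≤ ε) (hkε : ((k : ℝ) - 1) * ε ≤ 1) (hij : i < j) (hjk : j ≤ k)
    (hne : ¬(i = k - 1 ∧ j = k)) : ypt ε k i ≤ xpt ε k j := by
  have hk : (0 : ℝ) < k := by exact_mod_cast (hij.trans_le hjk).pos
  rw [ypt_of_lt (hij.trans_le hjk)]
  rcases hjk.lt_or_eq with hjk | rfl
  · have hij' : (i : ℝ) ≤ j - 1 := by
      rw [le_sub_iff_add_le]; exact_mod_cast hij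
    rw [xpt_of_lt hjk]
    gcongr
  · have hik : (i : ℝ) + 2 ≤ j := by exact_mod_cast (by omega : i + 2 ≤ j)
    rw [xpt_self, div_le_iff₀ hk, sub_mul, div_mul_cancel₀ _ hk.ne']
    nlinarith

lemma disjoint_Ioo_xpt_ypt (hε : 0 ≤ ε) (hkε : ((k : ℝ) - 1) * ε ≤ 1) (hij : i < j)
    (hjk : j ≤ k) (hne : ¬(i = k - 1 ∧ j = k)) :
    Disjoint (Set.Ioo (xpt ε k i) (ypt ε k i)) (Set.Ioo (xpt ε k j) (ypt ε k j)) :=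
  (Set.Ioc_disjoint_Ioc_of_le (ypt_le_xpt hε hkε hij hjk hne)).mono
    Set.Ioo_subset_Ioc_self Set.Ioo_subset_Ioc_self

lemma not_disjoint_Ioo_xpt_ypt_last_two (hk : 2 ≤ k) (hε : 0 < ε)
    (hkε : ((k : ℝ) - 1) * ε ≤ 1) :
    ¬ Disjoint (Set.Ioo (xpt ε k (k - 1)) (ypt ε k (k - 1)))
      (Set.Ioo (xpt ε k k) (ypt ε k k)) := by
  have hk' : (2 : ℝ) ≤ k := by exact_mod_cast hk
  have hkpos : (0 : ℝ) < k := by linarith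
  have hcast : ((k - 1 : ℕ) : ℝ) = k - 1 := by push_cast [Nat.cast_sub (by omega : 1 ≤ k)]; ring
  rw [Set.Ioo_disjoint_Ioo, not_le, max_lt_iff, lt_min_iff, lt_min_iff,
    xpt_of_lt (by omega), ypt_of_lt (by omega), xpt_self, ypt_self, hcast]
  refine ⟨⟨?_, ?_⟩, ?_, ?_⟩
  · gcongr; linarith
  · rw [div_lt_one hkpos]; nlinarith
  · rw [sub_lt_iff_lt_add, ← add_div, lt_div_iff₀ hkpos]; nlinarith
  · have : 0 < (1 + ε) / k := by positivity
    linarith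

end Intervals

lemma sub_one_mul_le_one_of_le_inv_sq {k S : ℕ} {ε : ℝ} (hkS : k ≤ S) (hε0 : 0 ≤ ε)
    (hεS : ε ≤ 1 / (S : ℝ) ^ 2) : ((k : ℝ) - 1) * ε ≤ 1 := by
  rcases Nat.eq_zero_or_pos S with rfl | hS
  · simp_all; linarith
  have hS' : (1 : ℝ) ≤ S := by exact_mod_cast hS
  have hkS' : (k : ℝ) ≤ S := by exact_mod_cast hkS
  calc ((k : ℝ) - 1) * ε ≤ S * (1 / (S : ℝ) ^ 2) := by gcongr; linarith
    _ = 1 / S := by field_simp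
    _ ≤ 1 := by rw [div_le_one (by linarith)]; exact hS'

theorem stmt_6 (k S : ℕ) (ε : ℝ) (hk : 2 ≤ k) (hkS : k ≤ S)
    (hε0 : 0 < ε) (hεS : ε ≤ 1 / (S : ℝ) ^ 2) :
    (∀ i j : ℕ, 1 ≤ i → i ≤ k → 1 ≤ j → j ≤ k → i ≠ j →
      ¬((i = k - 1 ∧ j = k) ∨ (i = k ∧ j = k - 1)) →
      Disjoint (Set.Ioo (xpt ε k i) (ypt ε k i)) (Set.Ioo (xpt ε k j) (ypt ε k j))) ∧
    ¬ Disjoint (Set.Ioo (xpt ε k (k - 1)) (ypt ε k (k - 1)))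
        (Set.Ioo (xpt ε k k) (ypt ε k k)) := by
  have hkε := sub_one_mul_le_one_of_le_inv_sq hkS hε0.le hεS
  refine ⟨fun i j _ hik _ hjk hij hpair => ?_, not_disjoint_Ioo_xpt_ypt_last_two hk hε0 hkε⟩
  rcases hij.lt_or_gt with hij | hji
  · exact disjoint_Ioo_xpt_ypt hε0.le hkε hij hjk fun h => hpair (Or.inl h)
  · exact (disjoint_Ioo_xpt_ypt hε0.le hkε hji hik fun h => hpair (Or.inr h.symm)).symm
end
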